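/- Let m ≥ 1 be an integer and λ ≥ 0, and let K ⊆ ℝ² be a compact set with at most m connected components and ℋ¹(K) ≤ λ. Let U and V be open subsets of ℝ² with U ⊆ V and δ := dist(U, ∂V) > 0. Then the number of connected components of V̄ ∩ K which intersect U ∩ K is at most m + λ/δ. -/

import Mathlib

open MeasureTheory Filter Set
open scoped Classical

noncomputable section

/-- The plane `ℝ²`. -/
abbrev E2 : Type := EuclideanSpace ℝ (Fin 2)

/-- Distance from a point to a set, with the convention `dist(x, ∅) = diam Ω`. -/
def distIn (Ω : Set E2) (x : E2) (S : Set E2) : ℝ :=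
  if S = ∅ then Metric.diam Ω else Metric.infDist x S

/-- Hausdorff distance between subsets of `closure Ω`, with the conventions
`dist(x, ∅) = diam Ω` and `sup ∅ = 0`. -/
def hausDistIn (Ω K₁ K₂ : Set E2) : ℝ :=
  max (sSup ((fun x => distIn Ω x K₂) '' K₁)) (sSup ((fun x => distIn Ω x K₁) '' K₂))

/-- Convergence of a sequence of compact subsets of `closure Ω` in the Hausdorff metric. -/
def TendstoHausdorff (Ω : Set E2) (K : ℕ → Set E2) (L : Set E2) : Prop :=
  Filter.Tendsto (fun n => hausDistIn Ω (K n) L) Filter.atTop (nhds 0)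

/-- `K` has at most `m` connected components: it is the union of `m` preconnected sets. -/
def AtMostComponents (m : ℕ) (K : Set E2) : Prop :=
  ∃ C : Fin m → Set E2, (∀ i, IsPreconnected (C i)) ∧ K = ⋃ i, C i

/-! Let `x ∈ U ∩ K` and let `C` be the component of `closure V ∩ K` through `x`. If the component
of `K` through `x` stays in `closure V`, it lies in `C`, so `C` contains one of the `m` connected
pieces of `K`; these components are disjoint, so there are at most `m` of them. Otherwise boundary
bumping makes `C` reach `∂V`, so the connected set `C` joins a point of `U` to `∂V` and
`ℋ¹(C) ≥ δ`; being disjoint subsets of `K`, there are at most `λ / δ` of them. -/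

section Connected

variable {X : Type*} [TopologicalSpace X]

theorem pairwiseDisjoint_connectedComponentIn (F : Set X) :
    (range (connectedComponentIn F)).PairwiseDisjoint id := by
  rintro _ ⟨x, rfl⟩ _ ⟨y, rfl⟩ hne
  refine Set.disjoint_left.2 fun z hzx hzy => hne ?_
  rw [connectedComponentIn_eq hzx, connectedComponentIn_eq hzy]

theorem IsClosed.isClosed_connectedComponentIn {F : Set X} (hF : IsClosed F) (x : X) :
    IsClosed (connectedComponentIn F x) := by
  by_cases hx : x ∈ F
  · refine isClosed_of_closure_subset <|
      isPreconnected_connectedComponentIn.closure.subset_connectedComponentIn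
        (subset_closure (mem_connectedComponentIn hx)) ?_
    exact closure_minimal (connectedComponentIn_subset F x) hF
  · rw [connectedComponentIn_eq_empty hx]
    exact isClosed_empty

theorem IsCompact.isCompact_connectedComponentIn [T2Space X] {K : Set X} (hK : IsCompact K)
    (x : X) : IsCompact (connectedComponentIn K x) :=
  hK.of_isClosed_subset (hK.isClosed.isClosed_connectedComponentIn x)
    (connectedComponentIn_subset K x)

theorem exists_isClopen_disjoint_of_disjoint_connectedComponent [T2Space X] [CompactSpace X]
    {B : Set X} (hB : IsClosed B) {x : X} (h : Disjoint (connectedComponent x) B) :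
    ∃ Q : Set X, IsClopen Q ∧ x ∈ Q ∧ Disjoint Q B := by
  rw [connectedComponent_eq_iInter_isClopen, Set.disjoint_iff_inter_eq_empty, inter_comm] at h
  obtain ⟨t, ht⟩ := hB.isCompact.elim_finite_subfamily_closed
    (fun Q : { Q : Set X // IsClopen Q ∧ x ∈ Q } => (Q : Set X)) (fun Q => Q.2.1.1) h
  refine ⟨⋂ Q ∈ t, (Q : Set X), isClopen_biInter_finset fun Q _ => Q.2.1,
    mem_iInter₂.2 fun Q _ => Q.2.2, ?_⟩
  rw [Set.disjoint_iff_inter_eq_empty, inter_comm, ht]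

theorem connectedComponentIn_inter_frontier_nonempty_of_isPreconnected [T2Space X] {D A : Set X}
    (hDc : IsCompact D) (hD : IsPreconnected D) (hA : IsClosed A) {x y : X} (hx : x ∈ A ∩ D)
    (hy : y ∈ D) (hyA : y ∉ A) : (connectedComponentIn (A ∩ D) x ∩ frontier A).Nonempty := by
  -- Otherwise a clopen neighbourhood of the component in `A ∩ D` avoids `frontier A`; it is then
  -- clopen in `D` as well, which splits `D` between `x` and `y`.
  by_contra hcon
  have : CompactSpace ↥(A ∩ D) := isCompact_iff_compactSpace.1 (hDc.inter_left hA)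
  have hcomp : Disjoint (connectedComponent (⟨x, hx⟩ : ↥(A ∩ D))) (Subtype.val ⁻¹' frontier A) := by
    refine Set.disjoint_left.2 fun z hz hzA => hcon ⟨z, ?_, hzA⟩
    rw [connectedComponentIn_eq_image hx]
    exact mem_image_of_mem _ hz
  obtain ⟨Q, hQ, hxQ, hQA⟩ := exists_isClopen_disjoint_of_disjoint_connectedComponent
    (isClosed_frontier.preimage continuous_subtype_val) hcomp
  obtain ⟨O, hO, rfl⟩ := isOpen_induced_iff.1 hQ.2
  set Q' : Set X := Subtype.val '' (Subtype.val ⁻¹' O : Set ↥(A ∩ D))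
  have hQ'closed : IsClosed Q' := (hQ.1.isCompact.image continuous_subtype_val).isClosed
  have hQ'int : Q' ⊆ O ∩ interior A := by
    rintro _ ⟨z, hzO, rfl⟩
    refine ⟨hzO, ?_⟩
    rw [← closure_sdiff_frontier]
    exact ⟨subset_closure z.2.1, Set.disjoint_left.1 hQA hzO⟩
  have hsplit := isPreconnected_iff_subset_of_disjoint.1 hD _ _ (hO.inter isOpen_interior)
    hQ'closed.isOpen_compl (fun z _ => (em (z ∈ Q')).imp (fun h => hQ'int h) id) ?_
  · rcases hsplit with h | h
    · exact hyA (interior_subset (h hy).2)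
    · exact h hx.2 ⟨⟨x, hx⟩, hxQ, rfl⟩
  · refine Set.eq_empty_iff_forall_notMem.2 fun z ⟨hzD, ⟨hzO, hzA⟩, hzQ'⟩ => hzQ' ?_
    exact ⟨⟨z, interior_subset hzA, hzD⟩, hzO, rfl⟩

theorem connectedComponentIn_subset_or_inter_frontier_nonempty [T2Space X] {K A : Set X}
    (hK : IsCompact K) (hA : IsClosed A) {x : X} (hx : x ∈ A ∩ K) :
    connectedComponentIn K x ⊆ connectedComponentIn (A ∩ K) x ∨
      (connectedComponentIn (A ∩ K) x ∩ frontier A).Nonempty := by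
  set D := connectedComponentIn K x
  have hxD : x ∈ D := mem_connectedComponentIn hx.2
  by_cases hDA : D ⊆ A
  · exact Or.inl <| isPreconnected_connectedComponentIn.subset_connectedComponentIn hxD
      fun z hz => ⟨hDA hz, connectedComponentIn_subset K x hz⟩
  obtain ⟨y, hyD, hyA⟩ := Set.not_subset.1 hDA
  refine Or.inr <| (connectedComponentIn_inter_frontier_nonempty_of_isPreconnected
    (hK.isCompact_connectedComponentIn x) isPreconnected_connectedComponentIn hA ⟨hx.1, hxD⟩
    hyD hyA).mono ?_
  exact inter_subset_inter_left _ <| connectedComponentIn_mono x <|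
    inter_subset_inter_right A (connectedComponentIn_subset K x)

theorem exists_subset_connectedComponentIn_or_inter_frontier_nonempty [T2Space X] {ι : Type*}
    {P : ι → Set X} {K A : Set X} (hP : ∀ i, IsPreconnected (P i)) (hKP : K = ⋃ i, P i)
    (hK : IsCompact K) (hA : IsClosed A) {x : X} (hx : x ∈ A ∩ K) :
    (∃ i, (P i).Nonempty ∧ P i ⊆ connectedComponentIn (A ∩ K) x) ∨
      (connectedComponentIn (A ∩ K) x ∩ frontier A).Nonempty := by
  refine (connectedComponentIn_subset_or_inter_frontier_nonempty hK hA hx).imp_left fun hsub => ?_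
  obtain ⟨i, hxi⟩ := mem_iUnion.1 (hKP ▸ hx.2)
  exact ⟨i, ⟨x, hxi⟩, ((hP i).subset_connectedComponentIn hxi (hKP ▸ subset_iUnion P i)).trans hsub⟩

end Connected

theorem IsPreconnected.ofReal_dist_le_hausdorffMeasure {X : Type*} [MetricSpace X]
    [MeasurableSpace X] [BorelSpace X] {C : Set X} (hC : IsPreconnected C) {a b : X}
    (ha : a ∈ C) (hb : b ∈ C) : ENNReal.ofReal (dist a b) ≤ μH[1] C := by
  have hlip : LipschitzWith 1 (dist a) := LipschitzWith.dist_right a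
  have hIcc : Icc 0 (dist a b) ⊆ dist a '' C := by
    simpa using (hC.image _ hlip.continuous.continuousOn).Icc_subset
      (mem_image_of_mem _ ha) (mem_image_of_mem _ hb)
  calc ENNReal.ofReal (dist a b) = μH[1] (Icc 0 (dist a b)) := by
        rw [hausdorffMeasure_real, Real.volume_Icc, sub_zero]
    _ ≤ μH[1] (dist a '' C) := measure_mono hIcc
    _ ≤ μH[1] C := by simpa using hlip.hausdorffMeasure_image_le zero_le_one C

theorem Set.finite_and_ncard_le_of_forall_nonempty_subset {α ι : Type*} [Finite ι]
    {S : Set (Set α)} (f : ι → Set α) (hS : S.PairwiseDisjoint id)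
    (h : ∀ C ∈ S, ∃ i, (f i).Nonempty ∧ f i ⊆ C) : S.Finite ∧ S.ncard ≤ Nat.card ι := by
  rcases S.eq_empty_or_nonempty with rfl | ⟨C₀, hC₀⟩
  · simp
  have : Nonempty ι := ⟨(h C₀ hC₀).choose⟩
  choose! g hg using h
  have hinj : InjOn g S := fun C hC C' hC' hgC => by
    obtain ⟨z, hz⟩ := (hg C hC).1
    exact hS.elim hC hC' <| not_disjoint_iff.2 ⟨z, (hg C hC).2 hz, (hg C' hC').2 (hgC ▸ hz)⟩
  refine ⟨Finite.of_injOn (mapsTo_univ g S) hinj finite_univ, ?_⟩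
  simpa using ncard_le_ncard_of_injOn g (fun _ _ => mem_univ _) hinj finite_univ

theorem MeasureTheory.finite_and_ncard_mul_le_measure_sUnion {α : Type*} [MeasurableSpace α]
    (μ : Measure α) {S : Set (Set α)} (hS : S.PairwiseDisjoint id)
    (hmeas : ∀ s ∈ S, MeasurableSet s) {ε : ENNReal} (hε : 0 < ε) (hge : ∀ s ∈ S, ε ≤ μ s)
    (hfin : μ (⋃₀ S) ≠ ⊤) : S.Finite ∧ S.ncard * ε ≤ μ (⋃₀ S) := by
  have hSfin : S.Finite := by
    have := Measure.finite_const_le_meas_of_disjoint_iUnion μ hε (As := fun s : S => (s : Set α))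
      (fun s => hmeas s s.2) (fun s t hst => hS s.2 t.2 (Subtype.coe_ne_coe.2 hst))
      (by rwa [← sUnion_eq_iUnion])
    have huniv : {s : S | ε ≤ μ s} = univ := eq_univ_of_forall fun s => hge s s.2
    rwa [huniv, finite_univ_iff, finite_coe_iff] at this
  refine ⟨hSfin, ?_⟩
  lift S to Finset (Set α) using hSfin
  rw [ncard_coe_finset, sUnion_eq_biUnion]
  calc S.card * ε = ∑ _ ∈ S, ε := by simp
    _ ≤ ∑ s ∈ S, μ s := Finset.sum_le_sum hge
    _ = μ (⋃ s ∈ S, s) := (measure_biUnion_finset hS hmeas).symm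

theorem finite_and_ncard_le_div_of_le_dist {X : Type*} [MetricSpace X] [MeasurableSpace X]
    [BorelSpace X] {F : Set X} (hF : IsClosed F) {S : Set (Set X)}
    (hS : S ⊆ range (connectedComponentIn F)) {δ lam : ℝ} (hδ : 0 < δ) (hlam : 0 ≤ lam)
    (hlen : μH[1] F ≤ ENNReal.ofReal lam) (hdist : ∀ C ∈ S, ∃ a ∈ C, ∃ b ∈ C, δ ≤ dist a b) :
    S.Finite ∧ (S.ncard : ℝ) ≤ lam / δ := by
  have hSF : ⋃₀ S ⊆ F := sUnion_subset fun C hC => by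
    obtain ⟨x, rfl⟩ := hS hC
    exact connectedComponentIn_subset F x
  have hmeas : ∀ C ∈ S, MeasurableSet C := fun C hC => by
    obtain ⟨x, rfl⟩ := hS hC
    exact (hF.isClosed_connectedComponentIn x).measurableSet
  have hge : ∀ C ∈ S, ENNReal.ofReal δ ≤ μH[1] C := fun C hC => by
    obtain ⟨a, ha, b, hb, hab⟩ := hdist C hC
    obtain ⟨x, rfl⟩ := hS hC
    exact (ENNReal.ofReal_le_ofReal hab).trans
      (isPreconnected_connectedComponentIn.ofReal_dist_le_hausdorffMeasure ha hb)
  have hSlen : μH[1] (⋃₀ S) ≤ ENNReal.ofReal lam := (measure_mono hSF).trans hlen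
  obtain ⟨hSfin, hcard⟩ := finite_and_ncard_mul_le_measure_sUnion μH[1]
    ((pairwiseDisjoint_connectedComponentIn F).subset hS) hmeas (ENNReal.ofReal_pos.2 hδ) hge
    (ne_top_of_le_ne_top ENNReal.ofReal_ne_top hSlen)
  refine ⟨hSfin, (le_div_iff₀ hδ).2 <| (ENNReal.ofReal_le_ofReal_iff hlam).1 ?_⟩
  rw [ENNReal.ofReal_mul (Nat.cast_nonneg _), ENNReal.ofReal_natCast]
  exact hcard.trans hSlen

theorem components_count_bound_general (m : ℕ) (lam : ℝ) (hlam : 0 ≤ lam)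
    (K : Set E2) (hKc : IsCompact K) (hKm : AtMostComponents m K)
    (hKlen : μH[1] K ≤ ENNReal.ofReal lam)
    (U V : Set E2) (hUV : U ⊆ V)
    (δ : ℝ) (hδ : 0 < δ)
    (hdist : ∀ x ∈ U, ∀ y ∈ frontier V, δ ≤ dist x y) :
    ∀ comps : Set (Set E2),
      comps = {C : Set E2 |
          (∃ x ∈ closure V ∩ K, C = connectedComponentIn (closure V ∩ K) x) ∧
          (C ∩ (U ∩ K)).Nonempty} →
      comps.Finite ∧ (comps.ncard : ℝ) ≤ m + lam / δ := by
  intro comps hcomps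
  obtain ⟨P, hP, hKP⟩ := hKm
  have hrep : ∀ C ∈ comps, ∃ x ∈ U ∩ K, C = connectedComponentIn (closure V ∩ K) x := by
    rintro C hC
    rw [hcomps] at hC
    obtain ⟨⟨x₀, -, rfl⟩, x, hx, hxUK⟩ := hC
    exact ⟨x, hxUK, connectedComponentIn_eq hx⟩
  have hrange : comps ⊆ range (connectedComponentIn (closure V ∩ K)) := fun C hC => by
    obtain ⟨x, -, rfl⟩ := hrep C hC
    exact mem_range_self x
  set compsA := {C ∈ comps | ∃ i, (P i).Nonempty ∧ P i ⊆ C}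
  set compsB := {C ∈ comps | (C ∩ frontier V).Nonempty}
  have hcover : comps ⊆ compsA ∪ compsB := fun C hC => by
    obtain ⟨x, ⟨hxU, hxK⟩, rfl⟩ := hrep C hC
    refine (exists_subset_connectedComponentIn_or_inter_frontier_nonempty hP hKP hKc
      isClosed_closure ⟨subset_closure (hUV hxU), hxK⟩).imp (⟨hC, ·⟩) fun ⟨y, hy, hyV⟩ => ?_
    exact ⟨hC, y, hy, frontier_closure_subset hyV⟩
  obtain ⟨hAfin, hAcard⟩ := finite_and_ncard_le_of_forall_nonempty_subset P
    (((pairwiseDisjoint_connectedComponentIn _).subset hrange).subset (sep_subset _ _))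
    fun C hC => hC.2
  obtain ⟨hBfin, hBcard⟩ := finite_and_ncard_le_div_of_le_dist (S := compsB)
    (isClosed_closure.inter hKc.isClosed) ((sep_subset _ _).trans hrange) hδ hlam
    ((measure_mono inter_subset_right).trans hKlen) fun C hCB => by
      obtain ⟨hC, y, hyC, hyV⟩ := hCB
      obtain ⟨x, ⟨hxU, hxK⟩, rfl⟩ := hrep C hC
      exact ⟨x, mem_connectedComponentIn ⟨subset_closure (hUV hxU), hxK⟩, y, hyC, hdist x hxU y hyV⟩
  refine ⟨(hAfin.union hBfin).subset hcover, ?_⟩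
  calc (comps.ncard : ℝ) ≤ compsA.ncard + compsB.ncard := by
        exact_mod_cast (ncard_le_ncard hcover (hAfin.union hBfin)).trans (ncard_union_le _ _)
    _ ≤ m + lam / δ := add_le_add (by simpa using hAcard) hBcard

/-- If `K` is compact with at most `m` connected components and `ℋ¹(K) ≤ λ`, and `U ⊆ V`
are open with `δ = dist(U, ∂V) > 0`, then the number of connected components of
`closure V ∩ K` which meet `U ∩ K` is at most `m + λ/δ`. -/
theorem components_count_bound (m : ℕ) (hm : 1 ≤ m) (lam : ℝ) (hlam : 0 ≤ lam)
    (K : Set E2) (hKc : IsCompact K) (hKm : AtMostComponents m K)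
    (hKlen : μH[1] K ≤ ENNReal.ofReal lam)
    (U V : Set E2) (hU : IsOpen U) (hV : IsOpen V) (hUV : U ⊆ V)
    (δ : ℝ) (hδ : 0 < δ)
    (hdist : ∀ x ∈ U, ∀ y ∈ frontier V, δ ≤ dist x y) :
    ∀ comps : Set (Set E2),
      comps = {C : Set E2 |
          (∃ x ∈ closure V ∩ K, C = connectedComponentIn (closure V ∩ K) x) ∧
          (C ∩ (U ∩ K)).Nonempty} →
      comps.Finite ∧ (comps.ncard : ℝ) ≤ m + lam / δ :=
  components_count_bound_general m lam hlam K hKc hKm hKlen U V hUV δ hδ hdist
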